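/- arXiv:1506.06940 — 3 statements merged into one kernel-verified Lean document; each statement's English description precedes it below -/
import Mathlib

section
/- Let R be a finitely generated commutative ring (a quotient of ℤ[x₁,...,xₙ]), and let I be a maximal ideal of R. Then the residue field R/I is finite. -/
/-!
ℤ is a Jacobson ring, so by Zariski's lemma the residue field `R ⧸ I`, being a finitely generated
ℤ-algebra, is a finitely generated abelian group. It is integral over ℤ, and ℤ is not a field, so
ℤ cannot embed into it: the residue field has positive characteristic `p`. A finitely generated
abelian group killed by `p` is finite.
-/

theorem isJacobsonRing_of_jacobson_bot_eq_bot {R : Type*} [CommRing R] [Ring.DimensionLEOne R]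
    (h : (⊥ : Ideal R).jacobson = ⊥) : IsJacobsonRing R := by
  rw [isJacobsonRing_iff_prime_eq]
  intro P hP
  rcases eq_or_ne P ⊥ with rfl | hP_ne
  · exact h
  · have := Ring.DimensionLEOne.maximalOfPrime hP_ne hP
    exact Ideal.jacobson_eq_self_of_isMaximal

theorem Int.jacobson_bot : (⊥ : Ideal ℤ).jacobson = ⊥ := by
  refine le_antisymm (fun x hx => ?_) Ideal.le_jacobson
  have h_plus := Ideal.mem_jacobson_bot.mp hx 1
  have h_minus := Ideal.mem_jacobson_bot.mp hx (-1)
  rw [Int.isUnit_iff] at h_plus h_minus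
  rw [Ideal.mem_bot]
  omega

instance Int.isJacobsonRing : IsJacobsonRing ℤ :=
  isJacobsonRing_of_jacobson_bot_eq_bot Int.jacobson_bot

theorem finite_of_moduleFinite_int_of_charP (A : Type*) [Ring A] [Module.Finite ℤ A]
    (p : ℕ) [CharP A p] [NeZero p] : Finite A := by
  refine Module.finite_of_fg_torsion A fun x => ⟨⟨p, ?_⟩, ?_⟩
  · exact mem_nonZeroDivisors_of_ne_zero (Int.natCast_ne_zero.mpr (NeZero.ne p))
  · change (p : ℤ) • x = 0
    rw [natCast_zsmul, nsmul_eq_mul, CharP.cast_eq_zero, zero_mul]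

theorem ringChar_ne_zero_of_isIntegral_int (K : Type*) [Field K] [Algebra.IsIntegral ℤ K] :
    ringChar K ≠ 0 := by
  intro h
  have : CharP K 0 := ringChar.of_eq h
  have : CharZero K := CharP.charP_to_charZero K
  exact Int.not_isField
    (isField_of_isIntegral_of_isField (algebraMap ℤ K).injective_int (Field.toIsField K))

theorem finite_of_field_of_finiteType_int (K : Type*) [Field K] (hK : Algebra.FiniteType ℤ K) :
    Finite K := by
  have : Module.Finite ℤ K := finite_of_finite_type_of_isJacobsonRing ℤ K
  have : NeZero (ringChar K) := ⟨ringChar_ne_zero_of_isIntegral_int K⟩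
  exact finite_of_moduleFinite_int_of_charP K (ringChar K)

theorem stmt_14 (R : Type*) [CommRing R] [Algebra.FiniteType ℤ R]
    (I : Ideal R) (hI : I.IsMaximal) : Finite (R ⧸ I) := by
  -- found before `R ⧸ I` becomes a field, whose ℤ-algebra instance is only defeq to the quotient's
  have h_fg : Algebra.FiniteType ℤ (R ⧸ I) := inferInstance
  let := Ideal.Quotient.field I
  exact finite_of_field_of_finiteType_int (R ⧸ I) h_fg
end

section
/- Let G be a group and N ⊴ G. Suppose that for every n ∈ ℕ, every finite Y ⊆ G \ N, and every finite Φ ⊆ N, there exists a group H in a class 𝒦 and a homomorphism φ : G → H such that φ(Y) ∩ Cₙ(φ(Φ), H) = ∅. Then for every finite subset Φ ⊆ G/N and every n, there exist H ∈ 𝒦 and a map ψ : Φ → H with ψ(1) = 1 such that ψ(Φ \ {1}) is n-separated from {ψ(g)ψ(h)ψ(gh)⁻¹ : g, h, gh ∈ Φ}, i.e., G/N is 𝒦-approximable. -/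
/-- `Cn n X` : the set of `n`-fold products of conjugates of elements `x` with
`x ∈ X` or `x⁻¹ ∈ X` (the `n`-consequences of `X`). -/
def Cn {H : Type*} [Group H] (n : ℕ) (X : Set H) : Set H :=
  {w | ∃ x g : Fin n → H, (∀ i, x i ∈ X ∨ (x i)⁻¹ ∈ X) ∧
    w = (List.ofFn fun i => (g i)⁻¹ * x i * g i).prod}

/-! A set-theoretic section of `G → G ⧸ N` lifting `1` to `1` transports the multiplication defects
of `G ⧸ N` into `N` and the nontrivial elements into `G \ N`. A homomorphism `φ` separating these two
finite sets then makes `φ ∘ s` the required approximation. -/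

section Defect

variable {Q H : Type*} [Mul Q] [Group H]

def defectSet (Φ : Set Q) (ψ : Q → H) : Set H :=
  {z | ∃ g h : Q, g ∈ Φ ∧ h ∈ Φ ∧ g * h ∈ Φ ∧ z = ψ g * ψ h * (ψ (g * h))⁻¹}

theorem defectSet_finite {Φ : Set Q} (hΦ : Φ.Finite) (ψ : Q → H) : (defectSet Φ ψ).Finite :=
  ((hΦ.prod hΦ).image fun p => ψ p.1 * ψ p.2 * (ψ (p.1 * p.2))⁻¹).subset <| by
    rintro _ ⟨g, h, hg, hh, -, rfl⟩
    exact ⟨(g, h), ⟨hg, hh⟩, rfl⟩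

theorem defectSet_monoidHom_comp {L : Type*} [Group L] (φ : H →* L) (Φ : Set Q) (ψ : Q → H) :
    defectSet Φ (φ ∘ ψ) = φ '' defectSet Φ ψ := by
  ext z
  constructor
  · rintro ⟨g, h, hg, hh, hgh, rfl⟩
    exact ⟨_, ⟨g, h, hg, hh, hgh, rfl⟩, by simp⟩
  · rintro ⟨_, ⟨g, h, hg, hh, hgh, rfl⟩, rfl⟩
    exact ⟨g, h, hg, hh, hgh, by simp⟩

end Defect

namespace QuotientGroup

variable {G : Type*} [Group G] (N : Subgroup G) [N.Normal]

noncomputable def unitalSection (q : G ⧸ N) : G :=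
  open Classical in if q = 1 then 1 else q.out

@[simp]
theorem unitalSection_one : unitalSection N 1 = 1 := if_pos rfl

@[simp]
theorem mk_unitalSection (q : G ⧸ N) : ((unitalSection N q : G) : G ⧸ N) = q := by
  unfold unitalSection
  split_ifs with hq
  · rw [hq, QuotientGroup.mk_one]
  · exact q.out_eq'

variable {N}

theorem section_notMem_of_ne_one {s : G ⧸ N → G} (hs : ∀ q, (s q : G ⧸ N) = q) {q : G ⧸ N}
    (hq : q ≠ 1) : s q ∉ N := fun hN =>
  hq <| hs q ▸ (QuotientGroup.eq_one_iff (s q)).2 hN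

theorem defectSet_section_subset {s : G ⧸ N → G} (hs : ∀ q, (s q : G ⧸ N) = q)
    (Φ : Set (G ⧸ N)) : defectSet Φ s ⊆ N := by
  rintro _ ⟨g, h, -, -, -, rfl⟩
  exact (QuotientGroup.eq_one_iff _).1 (by simp [hs])

end QuotientGroup

open QuotientGroup in
theorem stmt_16 {G : Type*} [Group G] (N : Subgroup G) [N.Normal]
    {ι : Type*} (K : ι → Type*) [∀ i, Group (K i)]
    (hsep : ∀ (n : ℕ) (Y Φ : Finset G), (Y : Set G) ⊆ ((N : Set G))ᶜ →
      (Φ : Set G) ⊆ (N : Set G) →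
      ∃ (i : ι) (φ : G →* K i), ((fun g => φ g) '' (Y : Set G)) ∩
        Cn n ((fun g => φ g) '' (Φ : Set G)) = ∅) :
    ∀ (Φ : Finset (G ⧸ N)) (n : ℕ), ∃ (i : ι) (ψ : G ⧸ N → K i),
      ψ 1 = 1 ∧
      (ψ '' ((Φ : Set (G ⧸ N)) \ {1})) ∩
        Cn n {z : K i | ∃ g h : G ⧸ N, g ∈ Φ ∧ h ∈ Φ ∧ g * h ∈ Φ ∧
          z = ψ g * ψ h * (ψ (g * h))⁻¹} = ∅ := by
  intro Φ n
  set s := unitalSection N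
  have hY : (s '' (Φ \ {1} : Set (G ⧸ N))).Finite := Φ.finite_toSet.sdiff.image s
  have hD : (defectSet (Φ : Set (G ⧸ N)) s).Finite := defectSet_finite Φ.finite_toSet s
  obtain ⟨i, φ, hφ⟩ := hsep n hY.toFinset hD.toFinset
    (by
      rw [hY.coe_toFinset]
      rintro _ ⟨q, ⟨-, hq⟩, rfl⟩
      exact section_notMem_of_ne_one (mk_unitalSection N) hq)
    (by rw [hD.coe_toFinset]; exact defectSet_section_subset (mk_unitalSection N) _)
  refine ⟨i, φ ∘ s, by simp [s], ?_⟩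
  change (φ ∘ s) '' _ ∩ Cn n (defectSet _ (φ ∘ s)) = ∅
  rwa [Set.image_comp, defectSet_monoidHom_comp, ← hY.coe_toFinset, ← hD.coe_toFinset]
end

section
/- Let G be a group, Y a finite subset of G, X ⊆ G, and ε > 0. Suppose for each y ∈ Y there is a homomorphism φ_y : G → A_{m_y} (alternating group) with normalized Hamming length ‖φ_y(y)‖ ≥ 1/2 and ‖φ_y(x)‖ < ε for all x ∈ X. Then there exist m and a homomorphism ψ : G → A_m such that ‖ψ(y)‖ ≥ 1/(2|Y|) for every y ∈ Y and ‖ψ(x)‖ < ε for every x ∈ X. -/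
/-!
The normalized Hamming length of a block-diagonal permutation `prodCongrRight σ` of `ι × β`
is the average of the lengths of its blocks, and it is invariant under relabelling the points.
Padding each `φ_y` by `r / m_y` copies of itself, with `r = lcm m_y`, makes all of them act on
`r` points without changing lengths; their block-diagonal sum `ψ` then has
`‖ψ(g)‖ = 𝔼_y ‖φ_y(g)‖`. This average is `≥ ‖φ_y(y)‖ / |Y| ≥ 1 / (2|Y|)` at `g = y ∈ Y`
and `< ε` at `g ∈ X`, and all the maps stay in the alternating groups since signs multiply.
-/

/-- The normalized Hamming length of a permutation of a finite type. -/
noncomputable def hnorm {α : Type*} [Fintype α] (h : Equiv.Perm α) : ℝ :=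
  (Nat.card {x : α | h x ≠ x} : ℝ) / (Fintype.card α : ℝ)

open Equiv Equiv.Perm
open scoped BigOperators

section HammingLength

variable {α β ι : Type*} [Fintype α] [Fintype β] [Fintype ι]

lemma hnorm_permCongr (e : α ≃ β) (σ : Perm α) : hnorm (e.permCongr σ) = hnorm σ := by
  rw [hnorm, hnorm, Fintype.card_congr e]
  congr 2
  exact Nat.card_congr (e.subtypeEquiv fun a => by simp).symm

lemma hnorm_prodCongrRight (σ : ι → Perm β) :
    hnorm (prodCongrRight σ) = 𝔼 i, hnorm (σ i) := by
  have hmoved : Nat.card {p : ι × β | prodCongrRight σ p ≠ p} =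
      ∑ i, Nat.card {b : β | σ i b ≠ b} := by
    rw [← Nat.card_sigma]
    exact Nat.card_congr
      { toFun := fun p => ⟨p.1.1, p.1.2, fun h => p.2 (Prod.ext rfl h)⟩
        invFun := fun q => ⟨(q.1, q.2.1), fun h => q.2.2 (by simpa using h)⟩
        left_inv := fun _ => rfl
        right_inv := fun _ => rfl }
  rw [hnorm, hmoved, Fintype.expect_eq_sum_div_card, Fintype.card_prod]
  simp only [hnorm, ← Finset.sum_div]
  push_cast
  rw [div_div, mul_comm]

lemma hnorm_nonneg (σ : Perm α) : 0 ≤ hnorm σ := by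
  unfold hnorm; positivity

lemma card_pos_of_hnorm_pos {σ : Perm α} (h : 0 < hnorm σ) : 0 < Fintype.card α :=
  Nat.pos_of_ne_zero fun h0 => h.ne' (by rw [hnorm, h0, Nat.cast_zero, div_zero])

end HammingLength

def Equiv.Perm.prodCongrRightHom (ι β : Type*) : (ι → Perm β) →* Perm (ι × β) where
  toFun := prodCongrRight
  map_one' := by ext <;> simp
  map_mul' σ τ := by ext <;> simp [mul_apply]

namespace alternatingGroup

variable {α β ι : Type*} [Fintype α] [DecidableEq α] [Fintype β] [DecidableEq β]
  [Fintype ι] [DecidableEq ι]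

def congr (e : α ≃ β) : alternatingGroup α →* alternatingGroup β :=
  (e.permCongrHom.toMonoidHom.comp (alternatingGroup α).subtype).codRestrict _ fun σ => by
    simpa [mem_alternatingGroup, permCongrHom_coe, sign_permCongr] using
      mem_alternatingGroup.mp σ.2

def prodCongrRight : (ι → alternatingGroup β) →* alternatingGroup (ι × β) :=
  ((prodCongrRightHom ι β).comp ((alternatingGroup β).subtype.compLeft ι)).codRestrict _
    fun σ => by
      simp [mem_alternatingGroup, prodCongrRightHom, sign_prodCongrRight,
        fun i => mem_alternatingGroup.mp (σ i).2]

end alternatingGroup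

section BlockSum

variable {G α β ι : Type*} [Group G] [Fintype α] [DecidableEq α] [Fintype β] [DecidableEq β]
  [Fintype ι] [DecidableEq ι]

def blockSum (φ : ι → G →* alternatingGroup β) : G →* alternatingGroup (ι × β) :=
  alternatingGroup.prodCongrRight.comp (MonoidHom.pi φ)

lemma hnorm_blockSum (φ : ι → G →* alternatingGroup β) (g : G) :
    hnorm (blockSum φ g : Perm (ι × β)) = 𝔼 i, hnorm (φ i g : Perm β) :=
  hnorm_prodCongrRight _

lemma hnorm_alternatingGroup_congr (e : α ≃ β) (σ : alternatingGroup α) :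
    hnorm (alternatingGroup.congr e σ : Perm β) = hnorm (σ : Perm α) :=
  hnorm_permCongr e σ

lemma exists_hom_fin_hnorm_eq {r : ℕ} (hr : r ≠ 0) (h : Fintype.card α ∣ r)
    (φ : G →* alternatingGroup α) :
    ∃ ψ : G →* alternatingGroup (Fin r),
      ∀ g, hnorm (ψ g : Perm (Fin r)) = hnorm (φ g : Perm α) := by
  obtain ⟨k, rfl⟩ := h
  have : NeZero k := ⟨right_ne_zero_of_mul hr⟩
  let e : Fin k × α ≃ Fin (Fintype.card α * k) :=
    Fintype.equivFinOfCardEq (by rw [Fintype.card_prod, Fintype.card_fin, mul_comm])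
  refine ⟨(alternatingGroup.congr e).comp (blockSum fun _ => φ), fun g => ?_⟩
  rw [MonoidHom.comp_apply, hnorm_alternatingGroup_congr, hnorm_blockSum,
    Finset.expect_const Finset.univ_nonempty]

theorem exists_hom_hnorm_eq_expect {m : ι → ℕ} (hm : ∀ i, m i ≠ 0)
    (φ : ∀ i, G →* alternatingGroup (Fin (m i))) :
    ∃ (M : ℕ) (ψ : G →* alternatingGroup (Fin M)),
      ∀ g, hnorm (ψ g : Perm (Fin M)) = 𝔼 i, hnorm (φ i g : Perm (Fin (m i))) := by
  set r := Finset.univ.lcm m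
  have hr : r ≠ 0 := Finset.lcm_ne_zero_iff.mpr fun i _ => hm i
  choose ψ hψ using fun i => exists_hom_fin_hnorm_eq hr
    (by simpa using Finset.dvd_lcm (Finset.mem_univ i)) (φ i)
  let e : ι × Fin r ≃ Fin (Fintype.card ι * r) :=
    Fintype.equivFinOfCardEq (by rw [Fintype.card_prod, Fintype.card_fin])
  refine ⟨_, (alternatingGroup.congr e).comp (blockSum ψ), fun g => ?_⟩
  simp only [MonoidHom.comp_apply, hnorm_alternatingGroup_congr, hnorm_blockSum, hψ]

end BlockSum

theorem stmt_17 {G : Type*} [Group G] (Y : Finset G) (X : Set G) (ε : ℝ) (hε : 0 < ε)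
    (m : Y → ℕ) (φ : ∀ y : Y, G →* alternatingGroup (Fin (m y)))
    (hy : ∀ y : Y, (1 : ℝ) / 2 ≤ hnorm ((φ y (y : G) : Equiv.Perm (Fin (m y)))))
    (hx : ∀ y : Y, ∀ x ∈ X, hnorm ((φ y x : Equiv.Perm (Fin (m y)))) < ε) :
    ∃ (M : ℕ) (ψ : G →* alternatingGroup (Fin M)),
      (∀ y ∈ Y, (1 : ℝ) / (2 * Y.card) ≤ hnorm ((ψ y : Equiv.Perm (Fin M)))) ∧
      (∀ x ∈ X, hnorm ((ψ x : Equiv.Perm (Fin M))) < ε) := by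
  classical
  have hm (y : Y) : m y ≠ 0 := by
    simpa using (card_pos_of_hnorm_pos (one_half_pos.trans_le (hy y))).ne'
  obtain ⟨M, ψ, hψ⟩ := exists_hom_hnorm_eq_expect hm φ
  refine ⟨M, ψ, fun y hyY => ?_, fun x hxX => ?_⟩
  · rw [hψ, Fintype.expect_eq_sum_div_card, Fintype.card_coe]
    calc (1 : ℝ) / (2 * Y.card) = (1 / 2) / Y.card := by rw [div_div]
      _ ≤ hnorm (φ ⟨y, hyY⟩ y : Perm (Fin (m ⟨y, hyY⟩))) / Y.card := by
        gcongr; exact hy ⟨y, hyY⟩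
      _ ≤ _ := by
        gcongr
        exact Finset.single_le_sum (fun i _ => hnorm_nonneg (φ i y : Perm (Fin (m i))))
          (Finset.mem_univ _)
  · rw [hψ]
    rcases isEmpty_or_nonempty Y with hY | ⟨⟨y₀⟩⟩
    · simpa using hε -- an expectation over the empty index type is `0`
    · exact Finset.expect_lt (fun y _ => (hx y x hxX).le)
        ⟨y₀, Finset.mem_univ _, hx y₀ x hxX⟩
end
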